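/- arXiv:1203.0919 — 3 statements merged into one kernel-verified Lean document; each statement's English description precedes it below -/
import Mathlib

section
/- Let Ω be a measurable space, 𝒜 a finite partition of Ω into nonempty measurable sets, D a finite nonempty set, L : D × Ω → ℝ with each f_d = −L(d,·) bounded and measurable, L̂ : D × 𝒜 → ℝ, ℳ a nonempty set of probability measures on Ω, and ℳ̂ a nonempty set of probability mass functions on 𝒜. If 0 < ε < 1/2, δ ≥ 0, L ∼_ε L̂ and ℳ ∼_δ ℳ̂, then for every γ ≥ 0: opt^γ(Ω,D,ℳ,L) ⊆ opt^{γ/(1−2ε) + 2(ε/(1−2ε) + δ)}(𝒜,D,ℳ̂,L̂). -/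
/-!
Two errors separate the expected utility `E_P(d)` from `E_P̂(d)`. Replacing `f_d` by the step
function `f̂_d` moves the integral by at most `ε R_D`, since `P` splits over the partition.
Replacing `P` by `P̂` moves `∑ f̂_d(A) P(A)` by at most half the oscillation of `f̂_d` times
`∑ |P(A) - P̂(A)|`: both weightings have total mass one, so `f̂_d` may first be centred at its
midrange. Hence a `γ`-optimal `d` for `P` has regret at most `γ R_D + 2 ε R_D + δ R̂_D` for `P̂`.
Finally `(1 - 2ε) R_D ≤ R̂_D`, since the range of `f_d` overshoots that of `f̂_d` by at most
`ε R_D` at each end; this converts `R_D` into `R̂_D`.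
-/

open MeasureTheory

theorem Finset.inf'_le_sup' {ι α : Type*} [LinearOrder α] {s : Finset ι} (hs : s.Nonempty)
    (g : ι → α) : s.inf' hs g ≤ s.sup' hs g :=
  (Finset.inf'_le g hs.choose_spec).trans (Finset.le_sup' g hs.choose_spec)

theorem abs_sum_mul_sub_sum_mul_le {ι : Type*} {s : Finset ι} (hs : s.Nonempty) (g p q : ι → ℝ)
    (hpq : ∑ i ∈ s, p i = ∑ i ∈ s, q i) :
    |∑ i ∈ s, g i * p i - ∑ i ∈ s, g i * q i| ≤
      (s.sup' hs g - s.inf' hs g) / 2 * ∑ i ∈ s, |p i - q i| := by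
  set m := (s.sup' hs g + s.inf' hs g) / 2 with hm
  have hcentre : ∑ i ∈ s, g i * p i - ∑ i ∈ s, g i * q i = ∑ i ∈ s, (g i - m) * (p i - q i) := by
    simp only [sub_mul, mul_sub, Finset.sum_sub_distrib, ← Finset.mul_sum, hpq]
    ring
  rw [hcentre, Finset.mul_sum]
  refine (Finset.abs_sum_le_sum_abs _ _).trans (Finset.sum_le_sum fun i hi => ?_)
  rw [abs_mul]
  refine mul_le_mul_of_nonneg_right (abs_le.2 ⟨?_, ?_⟩) (abs_nonneg _) <;>
    linarith [Finset.le_sup' g hi, Finset.inf'_le g hi, hm]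

section Partition

variable {Ω : Type*} {𝒜 : Finset (Set Ω)}

theorem sSup_sub_sInf_range_le_of_partition [Nonempty Ω] (h𝒜 : 𝒜.Nonempty)
    {f : Ω → ℝ} {g : Set Ω → ℝ} {C : ℝ} (hcover : ⋃ A ∈ 𝒜, A = Set.univ)
    (hfg : ∀ A ∈ 𝒜, ∀ w ∈ A, |f w - g A| ≤ C) :
    sSup (Set.range f) - sInf (Set.range f) ≤ 𝒜.sup' h𝒜 g - 𝒜.inf' h𝒜 g + 2 * C := by
  have hmem (w : Ω) : ∃ A ∈ 𝒜, w ∈ A := by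
    simpa using (hcover.symm ▸ Set.mem_univ w : w ∈ ⋃ A ∈ 𝒜, A)
  have hsup : sSup (Set.range f) ≤ 𝒜.sup' h𝒜 g + C := by
    refine csSup_le (Set.range_nonempty f) ?_
    rintro _ ⟨w, rfl⟩
    obtain ⟨A, hA, hw⟩ := hmem w
    linarith [(abs_le.1 (hfg A hA w hw)).2, Finset.le_sup' g hA]
  have hinf : 𝒜.inf' h𝒜 g - C ≤ sInf (Set.range f) := by
    refine le_csInf (Set.range_nonempty f) ?_
    rintro _ ⟨w, rfl⟩
    obtain ⟨A, hA, hw⟩ := hmem w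
    linarith [(abs_le.1 (hfg A hA w hw)).1, Finset.inf'_le g hA]
  linarith

variable [MeasurableSpace Ω]

theorem MeasureTheory.Integrable.of_bddAbove_of_bddBelow {μ : Measure Ω} [IsFiniteMeasure μ]
    {f : Ω → ℝ} (hf : Measurable f) (ha : BddAbove (Set.range f)) (hb : BddBelow (Set.range f)) :
    Integrable f μ := by
  obtain ⟨C, hC⟩ := (Metric.isBounded_of_bddAbove_of_bddBelow ha hb).exists_norm_le
  exact .of_bound hf.aestronglyMeasurable C (ae_of_all _ fun w => hC _ ⟨w, rfl⟩)

theorem sum_measureReal_eq_one_of_partition (P : Measure Ω) [IsProbabilityMeasure P]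
    (hmeas : ∀ A ∈ 𝒜, MeasurableSet A) (hdisj : (𝒜 : Set (Set Ω)).PairwiseDisjoint id)
    (hcover : ⋃ A ∈ 𝒜, A = Set.univ) :
    ∑ A ∈ 𝒜, P.real A = 1 := by
  have h := measureReal_biUnion_finset (μ := P) hdisj hmeas
  simp only [id] at h
  rw [← h, hcover, probReal_univ]

theorem integral_eq_sum_setIntegral_of_partition {μ : Measure Ω} {f : Ω → ℝ}
    (hf : Integrable f μ) (hmeas : ∀ A ∈ 𝒜, MeasurableSet A)
    (hdisj : (𝒜 : Set (Set Ω)).PairwiseDisjoint id) (hcover : ⋃ A ∈ 𝒜, A = Set.univ) :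
    ∫ w, f w ∂μ = ∑ A ∈ 𝒜, ∫ w in A, f w ∂μ := by
  rw [← setIntegral_univ, ← hcover]
  exact integral_biUnion_finset 𝒜 hmeas hdisj fun A _ => hf.integrableOn

theorem abs_setIntegral_sub_const_mul_le {μ : Measure Ω} {f : Ω → ℝ} {A : Set Ω} {c C : ℝ}
    (hA : μ A < ⊤) (hf : IntegrableOn f A μ) (hfc : ∀ w ∈ A, |f w - c| ≤ C) :
    |∫ w in A, f w ∂μ - c * μ.real A| ≤ C * μ.real A := by
  have hconst : c * μ.real A = ∫ _ in A, c ∂μ := by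
    rw [setIntegral_const, smul_eq_mul, mul_comm]
  rw [hconst, ← integral_sub hf (integrableOn_const hA.ne)]
  simpa only [Real.norm_eq_abs] using
    norm_setIntegral_le_of_norm_le_const hA fun w hw => (Real.norm_eq_abs _).trans_le (hfc w hw)

theorem abs_integral_sub_sum_mul_le_of_partition (P : Measure Ω) [IsProbabilityMeasure P]
    {f : Ω → ℝ} {g : Set Ω → ℝ} {C : ℝ} (hf : Integrable f P)
    (hmeas : ∀ A ∈ 𝒜, MeasurableSet A) (hdisj : (𝒜 : Set (Set Ω)).PairwiseDisjoint id)
    (hcover : ⋃ A ∈ 𝒜, A = Set.univ) (hfg : ∀ A ∈ 𝒜, ∀ w ∈ A, |f w - g A| ≤ C) :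
    |∫ w, f w ∂P - ∑ A ∈ 𝒜, g A * P.real A| ≤ C := by
  rw [integral_eq_sum_setIntegral_of_partition hf hmeas hdisj hcover, ← Finset.sum_sub_distrib]
  calc |∑ A ∈ 𝒜, (∫ w in A, f w ∂P - g A * P.real A)|
      ≤ ∑ A ∈ 𝒜, C * P.real A := (Finset.abs_sum_le_sum_abs _ _).trans <| Finset.sum_le_sum
        fun A hA => abs_setIntegral_sub_const_mul_le (measure_lt_top P A) hf.integrableOn
          (hfg A hA)
    _ = C := by rw [← Finset.mul_sum, sum_measureReal_eq_one_of_partition P hmeas hdisj hcover,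
          mul_one]

theorem abs_integral_sub_sum_mul_le_add_of_partition (P : Measure Ω) [IsProbabilityMeasure P]
    (h𝒜 : 𝒜.Nonempty) {f : Ω → ℝ} {g p : Set Ω → ℝ} {C δ : ℝ} (hf : Integrable f P)
    (hmeas : ∀ A ∈ 𝒜, MeasurableSet A) (hdisj : (𝒜 : Set (Set Ω)).PairwiseDisjoint id)
    (hcover : ⋃ A ∈ 𝒜, A = Set.univ) (hfg : ∀ A ∈ 𝒜, ∀ w ∈ A, |f w - g A| ≤ C)
    (hp : ∑ A ∈ 𝒜, p A = 1) (hPp : ∑ A ∈ 𝒜, |P.real A - p A| ≤ δ) :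
    |∫ w, f w ∂P - ∑ A ∈ 𝒜, g A * p A| ≤ C + (𝒜.sup' h𝒜 g - 𝒜.inf' h𝒜 g) / 2 * δ := by
  have hfinite := abs_sum_mul_sub_sum_mul_le h𝒜 g (fun A => P.real A) p
    ((sum_measureReal_eq_one_of_partition P hmeas hdisj hcover).trans hp.symm)
  have hwidth : 0 ≤ (𝒜.sup' h𝒜 g - 𝒜.inf' h𝒜 g) / 2 := by
    linarith [Finset.inf'_le_sup' h𝒜 g]
  calc |∫ w, f w ∂P - ∑ A ∈ 𝒜, g A * p A|
      ≤ |∫ w, f w ∂P - ∑ A ∈ 𝒜, g A * P.real A|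
        + |∑ A ∈ 𝒜, g A * P.real A - ∑ A ∈ 𝒜, g A * p A| := abs_sub_le _ _ _
    _ ≤ C + (𝒜.sup' h𝒜 g - 𝒜.inf' h𝒜 g) / 2 * δ := by
      gcongr
      · exact abs_integral_sub_sum_mul_le_of_partition P hf hmeas hdisj hcover hfg
      · exact hfinite.trans (mul_le_mul_of_nonneg_left hPp hwidth)

end Partition

theorem stmt_6_general {Ω : Type*} [MeasurableSpace Ω] [Nonempty Ω]
    {D : Type*} [Fintype D] [Nonempty D]
    (𝒜 : Finset (Set Ω)) (h𝒜 : 𝒜.Nonempty)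
    (hmeas : ∀ A ∈ 𝒜, MeasurableSet A)
    (hdisj : ∀ A ∈ 𝒜, ∀ B ∈ 𝒜, A ≠ B → Disjoint A B)
    (hcover : (⋃ A ∈ 𝒜, A) = Set.univ)
    (L : D × Ω → ℝ) (Lhat : D → Set Ω → ℝ)
    (hfmeas : ∀ d : D, Measurable fun w => -L (d, w))
    (hfa : ∀ d : D, BddAbove (Set.range fun w => -L (d, w)))
    (hfb : ∀ d : D, BddBelow (Set.range fun w => -L (d, w)))
    (ℳ : Set (Measure Ω))
    (hℳprob : ∀ P ∈ ℳ, IsProbabilityMeasure P)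
    (ℳhat : Set (Set Ω → ℝ))
    (hℳhatprob : ∀ Phat ∈ ℳhat, (∀ A ∈ 𝒜, 0 ≤ Phat A) ∧ ∑ A ∈ 𝒜, Phat A = 1)
    (ε δ : ℝ) (hε0 : 0 < ε) (hε2 : ε < 1 / 2) (hδ : 0 ≤ δ)
    (hLsim : ∀ d : D, ∀ A ∈ 𝒜, ∀ w ∈ A,
      |(-L (d, w)) - (-(Lhat d A))| ≤
        (sSup (Set.range fun w' => -L (d, w')) -
          sInf (Set.range fun w' => -L (d, w'))) * ε)
    (hMsim1 : ∀ P ∈ ℳ, ∃ Phat ∈ ℳhat, ∑ A ∈ 𝒜, |(P A).toReal - Phat A| ≤ δ)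
    (γ : ℝ) (hγ : 0 ≤ γ) :
    {d : D | ∃ P ∈ ℳ, ∀ e : D,
        (∫ w, (-L (e, w)) ∂P) - (∫ w, (-L (d, w)) ∂P) ≤
          γ * Finset.univ.sup' Finset.univ_nonempty
            (fun d' : D => sSup (Set.range fun w => -L (d', w)) -
              sInf (Set.range fun w => -L (d', w)))} ⊆
    {d : D | ∃ Phat ∈ ℳhat, ∀ e : D,
        (∑ A ∈ 𝒜, (-(Lhat e A)) * Phat A) - (∑ A ∈ 𝒜, (-(Lhat d A)) * Phat A) ≤
          (γ / (1 - 2 * ε) + 2 * (ε / (1 - 2 * ε) + δ)) *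
            Finset.univ.sup' Finset.univ_nonempty
              (fun d' : D => 𝒜.sup' h𝒜 (fun A => -(Lhat d' A)) -
                𝒜.inf' h𝒜 (fun A => -(Lhat d' A)))} := by
  rintro d ⟨P, hP, hopt⟩
  have := hℳprob P hP
  obtain ⟨Phat, hPhat, hPPhat⟩ := hMsim1 P hP
  refine ⟨Phat, hPhat, fun e => ?_⟩
  set width : D → ℝ := fun d' =>
    sSup (Set.range fun w => -L (d', w)) - sInf (Set.range fun w => -L (d', w))
  set widthHat : D → ℝ := fun d' =>
    𝒜.sup' h𝒜 (fun A => -(Lhat d' A)) - 𝒜.inf' h𝒜 (fun A => -(Lhat d' A))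
  set R := Finset.univ.sup' Finset.univ_nonempty width
  set Rhat := Finset.univ.sup' Finset.univ_nonempty widthHat
  have hRhat (d' : D) : widthHat d' ≤ Rhat := Finset.le_sup' widthHat (Finset.mem_univ d')
  have hpartition : (𝒜 : Set (Set Ω)).PairwiseDisjoint id := fun A hA B hB => hdisj A hA B hB
  have hexpect (d' : D) : |∫ w, -L (d', w) ∂P - ∑ A ∈ 𝒜, -Lhat d' A * Phat A|
      ≤ R * ε + Rhat / 2 * δ := by
    refine (abs_integral_sub_sum_mul_le_add_of_partition P h𝒜
      (.of_bddAbove_of_bddBelow (hfmeas d') (hfa d') (hfb d')) hmeas hpartition hcover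
      (hLsim d') (hℳhatprob Phat hPhat).2 hPPhat).trans ?_
    gcongr
    exacts [Finset.le_sup' width (Finset.mem_univ d'), hRhat d']
  have hc : 0 < 1 - 2 * ε := by linarith
  have hwidth : R ≤ Rhat / (1 - 2 * ε) := by
    refine Finset.sup'_le _ _ fun d' _ => (le_div_iff₀' hc).2 ?_
    have := sSup_sub_sInf_range_le_of_partition h𝒜 hcover (hLsim d')
    linarith [hRhat d']
  have hRhat_nonneg : 0 ≤ Rhat := by
    linarith [hRhat d, Finset.inf'_le_sup' h𝒜 fun A => -(Lhat d A)]
  calc ∑ A ∈ 𝒜, -Lhat e A * Phat A - ∑ A ∈ 𝒜, -Lhat d A * Phat A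
      ≤ (γ + 2 * ε) * R + δ * Rhat := by
        linarith [abs_le.1 (hexpect e), abs_le.1 (hexpect d), hopt e]
    _ ≤ (γ + 2 * ε) * (Rhat / (1 - 2 * ε)) + 2 * δ * Rhat := by
        gcongr
        linarith [mul_nonneg hδ hRhat_nonneg]
    _ = (γ / (1 - 2 * ε) + 2 * (ε / (1 - 2 * ε) + δ)) * Rhat := by
        field_simp
        ring

/-- Theorem 1, Eq. (1): if `L ∼_ε L̂` and `ℳ ∼_δ ℳ̂`, then
`opt^γ(Ω,D,ℳ,L) ⊆ opt^{γ/(1−2ε) + 2(ε/(1−2ε) + δ)}(𝒜,D,ℳ̂,L̂)`. -/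
theorem stmt_6 {Ω : Type*} [MeasurableSpace Ω] [Nonempty Ω]
    {D : Type*} [Fintype D] [Nonempty D]
    (𝒜 : Finset (Set Ω)) (h𝒜 : 𝒜.Nonempty)
    (hne : ∀ A ∈ 𝒜, A.Nonempty)
    (hmeas : ∀ A ∈ 𝒜, MeasurableSet A)
    (hdisj : ∀ A ∈ 𝒜, ∀ B ∈ 𝒜, A ≠ B → Disjoint A B)
    (hcover : (⋃ A ∈ 𝒜, A) = Set.univ)
    (L : D × Ω → ℝ) (Lhat : D → Set Ω → ℝ)
    (hfmeas : ∀ d : D, Measurable fun w => -L (d, w))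
    (hfa : ∀ d : D, BddAbove (Set.range fun w => -L (d, w)))
    (hfb : ∀ d : D, BddBelow (Set.range fun w => -L (d, w)))
    (ℳ : Set (Measure Ω)) (hℳne : ℳ.Nonempty)
    (hℳprob : ∀ P ∈ ℳ, IsProbabilityMeasure P)
    (ℳhat : Set (Set Ω → ℝ)) (hℳhatne : ℳhat.Nonempty)
    (hℳhatprob : ∀ Phat ∈ ℳhat, (∀ A ∈ 𝒜, 0 ≤ Phat A) ∧ ∑ A ∈ 𝒜, Phat A = 1)
    (ε δ : ℝ) (hε0 : 0 < ε) (hε2 : ε < 1 / 2) (hδ : 0 ≤ δ)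
    (hLsim : ∀ d : D, ∀ A ∈ 𝒜, ∀ w ∈ A,
      |(-L (d, w)) - (-(Lhat d A))| ≤
        (sSup (Set.range fun w' => -L (d, w')) -
          sInf (Set.range fun w' => -L (d, w'))) * ε)
    (hMsim1 : ∀ P ∈ ℳ, ∃ Phat ∈ ℳhat, ∑ A ∈ 𝒜, |(P A).toReal - Phat A| ≤ δ)
    (hMsim2 : ∀ Phat ∈ ℳhat, ∃ P ∈ ℳ, ∑ A ∈ 𝒜, |(P A).toReal - Phat A| ≤ δ)
    (γ : ℝ) (hγ : 0 ≤ γ) :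
    {d : D | ∃ P ∈ ℳ, ∀ e : D,
        (∫ w, (-L (e, w)) ∂P) - (∫ w, (-L (d, w)) ∂P) ≤
          γ * Finset.univ.sup' Finset.univ_nonempty
            (fun d' : D => sSup (Set.range fun w => -L (d', w)) -
              sInf (Set.range fun w => -L (d', w)))} ⊆
    {d : D | ∃ Phat ∈ ℳhat, ∀ e : D,
        (∑ A ∈ 𝒜, (-(Lhat e A)) * Phat A) - (∑ A ∈ 𝒜, (-(Lhat d A)) * Phat A) ≤
          (γ / (1 - 2 * ε) + 2 * (ε / (1 - 2 * ε) + δ)) *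
            Finset.univ.sup' Finset.univ_nonempty
              (fun d' : D => 𝒜.sup' h𝒜 (fun A => -(Lhat d' A)) -
                𝒜.inf' h𝒜 (fun A => -(Lhat d' A)))} :=
  stmt_6_general 𝒜 h𝒜 hmeas hdisj hcover L Lhat hfmeas hfa hfb ℳ hℳprob ℳhat hℳhatprob ε δ hε0 hε2
    hδ hLsim hMsim1 γ hγ
end

section
/- Let Ω be a nonempty finite set, 𝒜 a finite partition of Ω into nonempty sets, D a finite nonempty set, L : D × Ω → ℝ with f_d = −L(d,·) and R_D = max_{d∈D}(max_w f_d(w) − min_w f_d(w)) > 0, L̂ : D × 𝒜 → ℝ, ℳ a nonempty set of probability vectors on Ω, and ℳ̂ a nonempty set of probability mass functions on 𝒜. If 0 < ε < 1/2, δ ≥ 0, L ∼_ε L̂, and ext(closure(convexHull(ℳ))) ∼_δ ℳ̂ (where ext denotes the set of extreme points, and convex hull and closure are taken in ℝ^Ω), then for every γ ≥ 0: max^γ(𝒜,D,ℳ̂,L̂) ⊆ ⋂_{η>0} max^{η + γ(1+2ε) + 2(ε + δ(1+2ε))}(Ω,D,ℳ,L). -/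
/-!
Fix `d` that is `γ`-maximal for the coarse problem and a competitor `e`, take the witness
`Q̂ ∈ ℳ̂` and an extreme point `p` of `closure (convexHull ℳ)` with `p ∼_δ Q̂`. For every
decision, `E_p` and `E_Q̂` differ by at most `(ε + δ(1+2ε)) R_D`: replacing `f` by `f̂` inside
each cell costs `ε R_D`, and replacing the cell masses of `p` by those of `Q̂` costs `δ` times the
oscillation of `f̂`, which is at most `(1+2ε) R_D`; the same oscillation bound gives
`R̂_D ≤ (1+2ε) R_D`. So `p` satisfies the fine inequality with constant
`γ(1+2ε) + 2(ε + δ(1+2ε))`. Since `E_p(e) - E_p(d)` is a continuous linear functional of `p`,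
its infimum over `closure (convexHull ℳ)` is its infimum over `ℳ`, up to the slack `η`.
-/

open Finset

theorem abs_sum_mul_sub_sum_mul_le_s12 {ι : Type*} {s : Finset ι} {g μ ν : ι → ℝ} {c b : ℝ}
    (hμν : ∑ i ∈ s, μ i = ∑ i ∈ s, ν i) (hg : ∀ i ∈ s, |g i - c| ≤ b) :
    |∑ i ∈ s, g i * μ i - ∑ i ∈ s, g i * ν i| ≤ (∑ i ∈ s, |μ i - ν i|) * b := by
  have hcentre : ∑ i ∈ s, g i * μ i - ∑ i ∈ s, g i * ν i
      = ∑ i ∈ s, (g i - c) * (μ i - ν i) := by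
    simp only [sub_mul, mul_sub, sum_sub_distrib, ← mul_sum, hμν]
    ring
  rw [hcentre, sum_mul]
  refine (abs_sum_le_sum_abs _ _).trans (sum_le_sum fun i hi => ?_)
  rw [abs_mul, mul_comm]
  exact mul_le_mul_of_nonneg_left (hg i hi) (abs_nonneg _)

theorem sup'_sub_inf'_le_of_abs_sub_le {Ω : Type*} {𝒜 : Finset (Set Ω)} (h𝒜 : 𝒜.Nonempty)
    (hne : ∀ A ∈ 𝒜, A.Nonempty) {f : Ω → ℝ} {g : Set Ω → ℝ} {r t : ℝ}
    (hf : ∀ w v, f w - f v ≤ r) (hfg : ∀ A ∈ 𝒜, ∀ w ∈ A, |f w - g A| ≤ t) :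
    𝒜.sup' h𝒜 g - 𝒜.inf' h𝒜 g ≤ r + 2 * t := by
  obtain ⟨A, hA, hAmax⟩ := exists_mem_eq_sup' h𝒜 g
  obtain ⟨B, hB, hBmin⟩ := exists_mem_eq_inf' h𝒜 g
  obtain ⟨w, hw⟩ := hne A hA
  obtain ⟨v, hv⟩ := hne B hB
  have hwA := abs_le.mp (hfg A hA w hw)
  have hvB := abs_le.mp (hfg B hB v hv)
  linarith [hf w v]

section Partition

variable {Ω : Type*} [Fintype Ω] {𝒜 : Finset (Set Ω)}

theorem sum_eq_sum_sum_indicator_of_partition {M : Type*} [AddCommMonoid M]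
    (hdisj : (𝒜 : Set (Set Ω)).PairwiseDisjoint id) (hcover : ⋃ A ∈ 𝒜, A = Set.univ)
    (g : Ω → M) : ∑ w, g w = ∑ A ∈ 𝒜, ∑ w, A.indicator g w := by
  rw [sum_comm]
  refine sum_congr rfl fun w _ => ?_
  simpa [hcover] using indicator_biUnion_apply 𝒜 id hdisj (f := g) w

theorem abs_sum_mul_sub_sum_mul_sum_indicator_le
    (hdisj : (𝒜 : Set (Set Ω)).PairwiseDisjoint id) (hcover : ⋃ A ∈ 𝒜, A = Set.univ)
    {p f : Ω → ℝ} {g : Set Ω → ℝ} {a : ℝ} (hp : ∀ w, 0 ≤ p w)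
    (hfg : ∀ A ∈ 𝒜, ∀ w ∈ A, |f w - g A| ≤ a) :
    |∑ w, p w * f w - ∑ A ∈ 𝒜, g A * ∑ w, A.indicator p w| ≤ a * ∑ w, p w := by
  have hdiff : ∑ w, p w * f w - ∑ A ∈ 𝒜, g A * ∑ w, A.indicator p w
      = ∑ A ∈ 𝒜, ∑ w, A.indicator (fun w => p w * (f w - g A)) w := by
    rw [sum_eq_sum_sum_indicator_of_partition hdisj hcover, ← sum_sub_distrib]
    refine sum_congr rfl fun A _ => ?_
    rw [mul_sum, ← sum_sub_distrib]
    refine sum_congr rfl fun w _ => ?_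
    by_cases hw : w ∈ A <;> simp [hw, mul_sub, mul_comm]
  rw [hdiff, sum_eq_sum_sum_indicator_of_partition hdisj hcover p, mul_sum]
  refine (abs_sum_le_sum_abs _ _).trans (sum_le_sum fun A hA => ?_)
  rw [mul_sum]
  refine (abs_sum_le_sum_abs _ _).trans (sum_le_sum fun w _ => ?_)
  by_cases hw : w ∈ A
  · simp only [Set.indicator_of_mem hw, abs_mul, abs_of_nonneg (hp w), mul_comm a]
    exact mul_le_mul_of_nonneg_left (hfg A hA w hw) (hp w)
  · simp [hw]

theorem abs_sum_mul_sub_sum_mul_le_of_partition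
    (hdisj : (𝒜 : Set (Set Ω)).PairwiseDisjoint id) (hcover : ⋃ A ∈ 𝒜, A = Set.univ)
    (h𝒜 : 𝒜.Nonempty) (hne : ∀ A ∈ 𝒜, A.Nonempty)
    {f p : Ω → ℝ} {g Q : Set Ω → ℝ} {ε δ R : ℝ}
    (hf : ∀ w v, f w - f v ≤ R) (hfg : ∀ A ∈ 𝒜, ∀ w ∈ A, |f w - g A| ≤ R * ε)
    (hp : p ∈ stdSimplex ℝ Ω) (hQ : ∑ A ∈ 𝒜, Q A = 1)
    (hpQ : ∑ A ∈ 𝒜, |∑ w, A.indicator p w - Q A| ≤ δ) :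
    |∑ w, p w * f w - ∑ A ∈ 𝒜, g A * Q A| ≤ (ε + δ * (1 + 2 * ε)) * R := by
  have hfine := abs_sum_mul_sub_sum_mul_sum_indicator_le hdisj hcover hp.1 hfg
  rw [hp.2, mul_one] at hfine
  have hcentre : ∀ A ∈ 𝒜, |g A - 𝒜.inf' h𝒜 g| ≤ (1 + 2 * ε) * R := fun A hA => by
    rw [abs_of_nonneg (sub_nonneg.mpr (inf'_le g hA))]
    linarith [le_sup' g hA, sup'_sub_inf'_le_of_abs_sub_le h𝒜 hne hf hfg]
  have hmass : ∑ A ∈ 𝒜, ∑ w, A.indicator p w = ∑ A ∈ 𝒜, Q A := by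
    rw [hQ, ← sum_eq_sum_sum_indicator_of_partition hdisj hcover, hp.2]
  have hcoarse := abs_sum_mul_sub_sum_mul_le_s12 hmass hcentre
  obtain ⟨A, hA⟩ := h𝒜
  have hspread := (abs_nonneg _).trans (hcentre A hA)
  calc |∑ w, p w * f w - ∑ A ∈ 𝒜, g A * Q A|
      ≤ |∑ w, p w * f w - ∑ A ∈ 𝒜, g A * ∑ w, A.indicator p w|
        + |∑ A ∈ 𝒜, g A * ∑ w, A.indicator p w - ∑ A ∈ 𝒜, g A * Q A| := abs_sub_le _ _ _
    _ ≤ R * ε + δ * ((1 + 2 * ε) * R) :=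
        add_le_add hfine (hcoarse.trans (mul_le_mul_of_nonneg_right hpQ hspread))
    _ = (ε + δ * (1 + 2 * ε)) * R := by ring

end Partition

theorem closure_convexHull_subset_stdSimplex {Ω : Type*} [Fintype Ω] {ℳ : Set (Ω → ℝ)}
    (hℳ : ℳ ⊆ stdSimplex ℝ Ω) : closure (convexHull ℝ ℳ) ⊆ stdSimplex ℝ Ω :=
  closure_minimal (convexHull_min hℳ (convex_stdSimplex ℝ Ω)) (isClosed_stdSimplex ℝ Ω)

theorem exists_lt_of_mem_closure_convexHull {E : Type*} [AddCommGroup E] [Module ℝ E]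
    [TopologicalSpace E] {s : Set E} {x : E} (φ : E →L[ℝ] ℝ)
    (hx : x ∈ closure (convexHull ℝ s)) {t : ℝ} (hφx : φ x < t) : ∃ y ∈ s, φ y < t := by
  by_contra! hs
  have hhalf : closure (convexHull ℝ s) ⊆ {y | t ≤ φ y} :=
    closure_minimal (convexHull_min hs (convex_halfSpace_ge φ.toLinearMap.isLinear t))
      (isClosed_le continuous_const φ.continuous)
  exact (hφx.trans_le (hhalf hx)).false

theorem exists_mem_sum_mul_sub_sum_mul_lt_of_mem_closure_convexHull {Ω : Type*} [Fintype Ω]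
    {ℳ : Set (Ω → ℝ)} {p : Ω → ℝ} (hp : p ∈ closure (convexHull ℝ ℳ)) {f g : Ω → ℝ} {t : ℝ}
    (hpt : ∑ w, p w * f w - ∑ w, p w * g w < t) :
    ∃ q ∈ ℳ, ∑ w, q w * f w - ∑ w, q w * g w < t := by
  let φ : (Ω → ℝ) →L[ℝ] ℝ := ∑ w, (f w - g w) • ContinuousLinearMap.proj w
  have hφ : ∀ q, φ q = ∑ w, q w * f w - ∑ w, q w * g w := fun q => by
    simp [φ, ← sum_sub_distrib, mul_sub, mul_comm]
  simp only [← hφ] at hpt ⊢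
  exact exists_lt_of_mem_closure_convexHull φ hp hpt

theorem stmt_12_general {Ω : Type*} [Fintype Ω] [Nonempty Ω]
    {D : Type*} [Fintype D] [Nonempty D]
    (𝒜 : Finset (Set Ω)) (h𝒜 : 𝒜.Nonempty)
    (hne : ∀ A ∈ 𝒜, A.Nonempty)
    (hdisj : ∀ A ∈ 𝒜, ∀ B ∈ 𝒜, A ≠ B → Disjoint A B)
    (hcover : (⋃ A ∈ 𝒜, A) = Set.univ)
    (L : D → Ω → ℝ) (Lhat : D → Set Ω → ℝ)
    (hR : 0 < Finset.univ.sup' Finset.univ_nonempty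
      (fun d : D => Finset.univ.sup' Finset.univ_nonempty (fun w : Ω => -L d w) -
        Finset.univ.inf' Finset.univ_nonempty (fun w : Ω => -L d w)))
    (ℳ : Set (Ω → ℝ))
    (hℳ : ∀ p ∈ ℳ, (∀ w, 0 ≤ p w) ∧ ∑ w, p w = 1)
    (ℳhat : Set (Set Ω → ℝ))
    (hℳhat : ∀ Phat ∈ ℳhat, (∀ A ∈ 𝒜, 0 ≤ Phat A) ∧ ∑ A ∈ 𝒜, Phat A = 1)
    (ε δ : ℝ) (hε0 : 0 < ε)
    (hLsim : ∀ d : D, ∀ A ∈ 𝒜, ∀ w ∈ A,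
      |(-L d w) - (-(Lhat d A))| ≤
        (Finset.univ.sup' Finset.univ_nonempty (fun w' : Ω => -L d w') -
          Finset.univ.inf' Finset.univ_nonempty (fun w' : Ω => -L d w')) * ε)
    (hMsim2 : ∀ Phat ∈ ℳhat,
      ∃ p ∈ Set.extremePoints ℝ (closure (convexHull ℝ ℳ)),
        ∑ A ∈ 𝒜, |(∑ w, Set.indicator A p w) - Phat A| ≤ δ)
    (γ : ℝ) (hγ : 0 ≤ γ) :
    {d : D | ∀ e : D, ∃ Phat ∈ ℳhat,
        (∑ A ∈ 𝒜, (-(Lhat e A)) * Phat A) - (∑ A ∈ 𝒜, (-(Lhat d A)) * Phat A) ≤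
          γ * Finset.univ.sup' Finset.univ_nonempty
            (fun d' : D => 𝒜.sup' h𝒜 (fun A => -(Lhat d' A)) -
              𝒜.inf' h𝒜 (fun A => -(Lhat d' A)))} ⊆
    ⋂ (η : ℝ) (_ : 0 < η),
      {d : D | ∀ e : D, ∃ p ∈ ℳ,
          (∑ w, p w * (-L e w)) - (∑ w, p w * (-L d w)) ≤
            (η + γ * (1 + 2 * ε) + 2 * (ε + δ * (1 + 2 * ε))) *
              Finset.univ.sup' Finset.univ_nonempty
                (fun d' : D => Finset.univ.sup' Finset.univ_nonempty (fun w : Ω => -L d' w) -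
                  Finset.univ.inf' Finset.univ_nonempty (fun w : Ω => -L d' w))} := by
  intro d hd
  refine Set.mem_iInter₂.mpr fun η hη e => ?_
  set R := Finset.univ.sup' Finset.univ_nonempty
    (fun d : D => Finset.univ.sup' Finset.univ_nonempty (fun w : Ω => -L d w) -
      Finset.univ.inf' Finset.univ_nonempty (fun w : Ω => -L d w))
  have hRd : ∀ d, Finset.univ.sup' Finset.univ_nonempty (fun w : Ω => -L d w) -
      Finset.univ.inf' Finset.univ_nonempty (fun w : Ω => -L d w) ≤ R :=
    fun d => le_sup' (fun d : D => Finset.univ.sup' Finset.univ_nonempty (fun w : Ω => -L d w) -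
      Finset.univ.inf' Finset.univ_nonempty (fun w : Ω => -L d w)) (mem_univ d)
  have hspread : ∀ d w v, -L d w - -L d v ≤ R := fun d w v => by
    linarith [le_sup' (fun w => -L d w) (mem_univ w), inf'_le (fun w => -L d w) (mem_univ v), hRd d]
  have hLsim' : ∀ d, ∀ A ∈ 𝒜, ∀ w ∈ A, |-L d w - -Lhat d A| ≤ R * ε := fun d A hA w hw =>
    (hLsim d A hA w hw).trans (mul_le_mul_of_nonneg_right (hRd d) hε0.le)
  have hdisj' : (𝒜 : Set (Set Ω)).PairwiseDisjoint id := fun A hA B hB => hdisj A hA B hB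
  have hRhat : Finset.univ.sup' Finset.univ_nonempty (fun d' : D =>
      𝒜.sup' h𝒜 (fun A => -Lhat d' A) - 𝒜.inf' h𝒜 (fun A => -Lhat d' A)) ≤ (1 + 2 * ε) * R :=
    sup'_le _ _ fun d' _ =>
      (sup'_sub_inf'_le_of_abs_sub_le h𝒜 hne (hspread d') (hLsim' d')).trans_eq (by ring)
  obtain ⟨Q, hQ, hgap⟩ := hd e
  obtain ⟨p, hpext, hpQ⟩ := hMsim2 Q hQ
  have hp := closure_convexHull_subset_stdSimplex hℳ hpext.1
  have happrox : ∀ d', |∑ w, p w * -L d' w - ∑ A ∈ 𝒜, -Lhat d' A * Q A| ≤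
      (ε + δ * (1 + 2 * ε)) * R := fun d' =>
    abs_sum_mul_sub_sum_mul_le_of_partition hdisj' hcover h𝒜 hne (hspread d') (hLsim' d') hp
      (hℳhat Q hQ).2 hpQ
  refine (exists_mem_sum_mul_sub_sum_mul_lt_of_mem_closure_convexHull hpext.1 ?_).imp
    fun _ hq => ⟨hq.1, hq.2.le⟩
  linarith [abs_le.mp (happrox e), abs_le.mp (happrox d), mul_le_mul_of_nonneg_left hRhat hγ,
    mul_pos hη hR]

/-- Theorem 2, Eq. (13): if `L ∼_ε L̂` and
`ext(closure(cohull(ℳ))) ∼_δ ℳ̂`, then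
`max^γ(𝒜,D,ℳ̂,L̂) ⊆ ⋂_{η>0} max^{η + γ(1+2ε) + 2(ε + δ(1+2ε))}(Ω,D,ℳ,L)`. -/
theorem stmt_12 {Ω : Type*} [Fintype Ω] [Nonempty Ω]
    {D : Type*} [Fintype D] [Nonempty D]
    (𝒜 : Finset (Set Ω)) (h𝒜 : 𝒜.Nonempty)
    (hne : ∀ A ∈ 𝒜, A.Nonempty)
    (hdisj : ∀ A ∈ 𝒜, ∀ B ∈ 𝒜, A ≠ B → Disjoint A B)
    (hcover : (⋃ A ∈ 𝒜, A) = Set.univ)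
    (L : D → Ω → ℝ) (Lhat : D → Set Ω → ℝ)
    (hR : 0 < Finset.univ.sup' Finset.univ_nonempty
      (fun d : D => Finset.univ.sup' Finset.univ_nonempty (fun w : Ω => -L d w) -
        Finset.univ.inf' Finset.univ_nonempty (fun w : Ω => -L d w)))
    (ℳ : Set (Ω → ℝ)) (hℳne : ℳ.Nonempty)
    (hℳ : ∀ p ∈ ℳ, (∀ w, 0 ≤ p w) ∧ ∑ w, p w = 1)
    (ℳhat : Set (Set Ω → ℝ)) (hℳhatne : ℳhat.Nonempty)
    (hℳhat : ∀ Phat ∈ ℳhat, (∀ A ∈ 𝒜, 0 ≤ Phat A) ∧ ∑ A ∈ 𝒜, Phat A = 1)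
    (ε δ : ℝ) (hε0 : 0 < ε) (hε2 : ε < 1 / 2) (hδ : 0 ≤ δ)
    (hLsim : ∀ d : D, ∀ A ∈ 𝒜, ∀ w ∈ A,
      |(-L d w) - (-(Lhat d A))| ≤
        (Finset.univ.sup' Finset.univ_nonempty (fun w' : Ω => -L d w') -
          Finset.univ.inf' Finset.univ_nonempty (fun w' : Ω => -L d w')) * ε)
    (hMsim1 : ∀ p ∈ Set.extremePoints ℝ (closure (convexHull ℝ ℳ)),
      ∃ Phat ∈ ℳhat, ∑ A ∈ 𝒜, |(∑ w, Set.indicator A p w) - Phat A| ≤ δ)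
    (hMsim2 : ∀ Phat ∈ ℳhat,
      ∃ p ∈ Set.extremePoints ℝ (closure (convexHull ℝ ℳ)),
        ∑ A ∈ 𝒜, |(∑ w, Set.indicator A p w) - Phat A| ≤ δ)
    (γ : ℝ) (hγ : 0 ≤ γ) :
    {d : D | ∀ e : D, ∃ Phat ∈ ℳhat,
        (∑ A ∈ 𝒜, (-(Lhat e A)) * Phat A) - (∑ A ∈ 𝒜, (-(Lhat d A)) * Phat A) ≤
          γ * Finset.univ.sup' Finset.univ_nonempty
            (fun d' : D => 𝒜.sup' h𝒜 (fun A => -(Lhat d' A)) -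
              𝒜.inf' h𝒜 (fun A => -(Lhat d' A)))} ⊆
    ⋂ (η : ℝ) (_ : 0 < η),
      {d : D | ∀ e : D, ∃ p ∈ ℳ,
          (∑ w, p w * (-L e w)) - (∑ w, p w * (-L d w)) ≤
            (η + γ * (1 + 2 * ε) + 2 * (ε + δ * (1 + 2 * ε))) *
              Finset.univ.sup' Finset.univ_nonempty
                (fun d' : D => Finset.univ.sup' Finset.univ_nonempty (fun w : Ω => -L d' w) -
                  Finset.univ.inf' Finset.univ_nonempty (fun w : Ω => -L d' w))} :=
  stmt_12_general 𝒜 h𝒜 hne hdisj hcover L Lhat hR ℳ hℳ ℳhat hℳhat ε δ hε0 hLsim hMsim2 γ hγ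
end

section
/- Let Ω be a nonempty finite set, D a finite nonempty set, L : D × Ω → ℝ with f_d = −L(d,·) and R_D = max_{d∈D}(max_w f_d(w) − min_w f_d(w)) > 0, and ℳ a nonempty set of probability vectors on Ω. Suppose ε > 0 and max^ε(Ω,D,ℳ,L) = max^δ(Ω,D,ℳ,L) for every δ > ε. Then max^ε(Ω,D,ℳ,L) = max^ε(Ω,D,closure(ℳ),L), where the closure is taken in ℝ^Ω. -/
/-- Expected utility of decision `d` under probability vector `p`,
for loss `L` (`f_d = -L(d,·)`). -/
def expUtil {Ω D : Type*} [Fintype Ω] (p : Ω → ℝ) (L : D → Ω → ℝ) (d : D) : ℝ :=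
  ∑ w, p w * (-L d w)

/-- `R_D = max_{d∈D} (max_w f_d(w) − min_w f_d(w))`. -/
noncomputable def lossRange {Ω D : Type*} [Fintype Ω] [Nonempty Ω] [Fintype D] [Nonempty D]
    (L : D → Ω → ℝ) : ℝ :=
  Finset.univ.sup' Finset.univ_nonempty
    (fun d : D => Finset.univ.sup' Finset.univ_nonempty (fun w : Ω => -L d w) -
      Finset.univ.inf' Finset.univ_nonempty (fun w : Ω => -L d w))

/-- The set of `ε`-maximal decisions `max^ε(Ω,D,ℳ,L)`. -/
noncomputable def maxSet {Ω D : Type*} [Fintype Ω] [Nonempty Ω] [Fintype D] [Nonempty D]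
    (ε : ℝ) (ℳ : Set (Ω → ℝ)) (L : D → Ω → ℝ) : Set D :=
  {d : D | ∀ e : D, ∃ p ∈ ℳ, expUtil p L e - expUtil p L d ≤ ε * lossRange L}


/-! Enlarging `ℳ` to its closure can only enlarge the ε-maximal set. Conversely, an
ε-witness `p ∈ closure ℳ` has points of `ℳ` arbitrarily close to it, and since expected
utility is continuous in `p` these are δ-witnesses for every `δ > ε`, the slack
`(δ - ε) R_D` being positive. Thus `max^ε(closure ℳ) ⊆ max^δ(ℳ)`, which equals `max^ε(ℳ)`
by stability. -/

theorem continuous_expUtil {Ω D : Type*} [Fintype Ω] (L : D → Ω → ℝ) (d : D) :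
    Continuous fun p : Ω → ℝ => expUtil p L d := by
  unfold expUtil
  fun_prop

section MaxSet

variable {Ω D : Type*} [Fintype Ω] [Nonempty Ω] [Fintype D] [Nonempty D]

theorem maxSet_mono {ℳ ℳ' : Set (Ω → ℝ)} (h : ℳ ⊆ ℳ') (ε : ℝ) (L : D → Ω → ℝ) :
    maxSet ε ℳ L ⊆ maxSet ε ℳ' L := fun _ hd e =>
  let ⟨p, hp, hle⟩ := hd e
  ⟨p, h hp, hle⟩

theorem maxSet_closure_subset {L : D → Ω → ℝ} (hR : 0 < lossRange L) (ℳ : Set (Ω → ℝ))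
    {ε δ : ℝ} (hεδ : ε < δ) : maxSet ε (closure ℳ) L ⊆ maxSet δ ℳ L := by
  intro d hd e
  obtain ⟨p, hp, hle⟩ := hd e
  have hopen : IsOpen {q : Ω → ℝ | expUtil q L e - expUtil q L d < δ * lossRange L} :=
    isOpen_lt ((continuous_expUtil L e).sub (continuous_expUtil L d)) continuous_const
  have hpU : expUtil p L e - expUtil p L d < δ * lossRange L :=
    hle.trans_lt (mul_lt_mul_of_pos_right hεδ hR)
  obtain ⟨q, hqU, hq⟩ := mem_closure_iff.mp hp _ hopen hpU
  exact ⟨q, hq, le_of_lt hqU⟩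

end MaxSet

theorem stmt_14_general {Ω : Type*} [Fintype Ω] [Nonempty Ω]
    {D : Type*} [Fintype D] [Nonempty D]
    (L : D → Ω → ℝ) (hR : 0 < lossRange L)
    (ℳ : Set (Ω → ℝ))
    (ε : ℝ)
    (hstab : ∀ δ : ℝ, ε < δ → maxSet ε ℳ L = maxSet δ ℳ L) :
    maxSet ε ℳ L = maxSet ε (closure ℳ) L := by
  refine (maxSet_mono subset_closure ε L).antisymm ?_
  rw [hstab (ε + 1) (lt_add_one ε)]
  exact maxSet_closure_subset hR ℳ (lt_add_one ε)

/-- If `max^ε(Ω,D,ℳ,L) = max^δ(Ω,D,ℳ,L)` for every `δ > ε > 0`, then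
`max^ε(Ω,D,ℳ,L) = max^ε(Ω,D,closure(ℳ),L)`. -/
theorem stmt_14 {Ω : Type*} [Fintype Ω] [Nonempty Ω]
    {D : Type*} [Fintype D] [Nonempty D]
    (L : D → Ω → ℝ) (hR : 0 < lossRange L)
    (ℳ : Set (Ω → ℝ)) (hℳne : ℳ.Nonempty)
    (hℳ : ∀ p ∈ ℳ, (∀ w, 0 ≤ p w) ∧ ∑ w, p w = 1)
    (ε : ℝ) (hε : 0 < ε)
    (hstab : ∀ δ : ℝ, ε < δ → maxSet ε ℳ L = maxSet δ ℳ L) :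
    maxSet ε ℳ L = maxSet ε (closure ℳ) L :=
  stmt_14_general L hR ℳ ε hstab
end
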